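/- arXiv:1309.1109 — 6 statements merged into one kernel-verified Lean document; each statement's English description precedes it below -/
import Mathlib

section
/- Comparison principle: let p > 1 and let a : [x₀, ∞) → ℝ be continuous, bounded, with a(x) > 0 for x > x₀. Suppose W, V : [x₀, ∞) → ℝ are C¹ with |W'|^{p-2}W' and |V'|^{p-2}V' differentiable, W' and V' bounded, W(x₀) = V(x₀), lim_{x→∞} W(x) = lim_{x→∞} V(x) = 0, and (|W'|^{p-2}W')' ≤ a(x)|W|^{p-2}W, (|V'|^{p-2}V')' ≥ a(x)|V|^{p-2}V on (x₀, ∞). Then V(x) ≤ W(x) for all x ≥ x₀. -/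
/-!
Suppose `V > W` somewhere. Since `V - W` vanishes at `x₀` and at infinity, it attains a positive
maximum at some `c > x₀`, where `V'(c) = W'(c)`. Just to the right of `c` we still have `V > W`, so,
`a` being positive and `φ_p(s) = |s|^{p-2} s` strictly increasing, the two differential
inequalities give `(φ_p(V') - φ_p(W'))' ≥ a (φ_p(V) - φ_p(W)) > 0`. Hence `φ_p(V') > φ_p(W')`,
i.e. `V' > W'`, and `V - W` keeps increasing past its maximum: a contradiction.
-/

open Real Filter Set Topology

noncomputable def pLaplacianFlux (p s : ℝ) : ℝ := |s| ^ (p - 2) * s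

section pLaplacianFlux

variable {p : ℝ}

lemma pLaplacianFlux_neg (s : ℝ) : pLaplacianFlux p (-s) = -pLaplacianFlux p s := by
  simp [pLaplacianFlux]

lemma pLaplacianFlux_of_nonneg (hp : 1 < p) {s : ℝ} (hs : 0 ≤ s) :
    pLaplacianFlux p s = s ^ (p - 1) := by
  rcases hs.eq_or_lt with rfl | hs
  · simp [pLaplacianFlux, zero_rpow (by linarith : p - 1 ≠ 0)]
  · rw [pLaplacianFlux, abs_of_pos hs, show p - 1 = p - 2 + 1 by ring, rpow_add_one hs.ne']

lemma strictMono_pLaplacianFlux (hp : 1 < p) : StrictMono (pLaplacianFlux p) := by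
  refine strictMono_of_odd_strictMonoOn_nonneg pLaplacianFlux_neg fun s hs t ht hst => ?_
  rw [pLaplacianFlux_of_nonneg hp hs, pLaplacianFlux_of_nonneg hp ht]
  exact strictMonoOn_rpow_Ici_of_exponent_pos (by linarith) hs ht hst

end pLaplacianFlux

lemma exists_isMaxOn_Ici_of_tendsto_zero {u : ℝ → ℝ} {x₀ x₁ : ℝ}
    (hu : ContinuousOn u (Ici x₀)) (hlim : Tendsto u atTop (𝓝 0)) (hx₁ : x₁ ∈ Ici x₀)
    (hpos : 0 < u x₁) : ∃ c ∈ Ici x₀, IsMaxOn u (Ici x₀) c := by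
  refine hu.exists_isMaxOn' isClosed_Ici hx₁ ?_
  rw [cocompact_eq_atBot_atTop, inf_sup_right, (disjoint_atBot_principal_Ici x₀).eq_bot,
    bot_sup_eq]
  exact (hlim.eventually (ge_mem_nhds hpos)).filter_mono inf_le_left

lemma strictMonoOn_sub_of_deriv_pLaplacianFlux_lt {p c d : ℝ} (hp : 1 < p)
    {V W gV gW : ℝ → ℝ} (hV : ∀ x ∈ Icc c d, DifferentiableAt ℝ V x)
    (hW : ∀ x ∈ Icc c d, DifferentiableAt ℝ W x)
    (hgV : ∀ x ∈ Icc c d, HasDerivAt (fun y => pLaplacianFlux p (deriv V y)) (gV x) x)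
    (hgW : ∀ x ∈ Icc c d, HasDerivAt (fun y => pLaplacianFlux p (deriv W y)) (gW x) x)
    (hg : ∀ x ∈ Ioo c d, gW x < gV x) (hc : deriv V c = deriv W c) :
    StrictMonoOn (V - W) (Icc c d) := by
  have hflux : StrictMonoOn
      (fun x => pLaplacianFlux p (deriv V x) - pLaplacianFlux p (deriv W x)) (Icc c d) := by
    refine strictMonoOn_of_deriv_pos (convex_Icc c d)
      (fun x hx => ((hgV x hx).fun_sub (hgW x hx)).continuousAt.continuousWithinAt) fun x hx => ?_
    rw [interior_Icc] at hx
    rw [((hgV x (Ioo_subset_Icc_self hx)).fun_sub (hgW x (Ioo_subset_Icc_self hx))).deriv]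
    linarith [hg x hx]
  refine strictMonoOn_of_deriv_pos (convex_Icc c d)
    (fun x hx => ((hV x hx).sub (hW x hx)).continuousAt.continuousWithinAt) fun x hx => ?_
  rw [interior_Icc] at hx
  have hcd : c ≤ d := (hx.1.trans hx.2).le
  have hlt := hflux (left_mem_Icc.2 hcd) (Ioo_subset_Icc_self hx) hx.1
  simp only [hc, sub_self, sub_pos] at hlt
  rw [deriv_sub (hV x (Ioo_subset_Icc_self hx)) (hW x (Ioo_subset_Icc_self hx)), sub_pos]
  exact (strictMono_pLaplacianFlux hp).lt_iff_lt.1 hlt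

theorem stmt2_general (p x₀ : ℝ) (hp : 1 < p) (a W V : ℝ → ℝ)
    (ha_pos : ∀ x > x₀, 0 < a x)
    (hW1 : ∀ x ∈ Set.Ici x₀, DifferentiableAt ℝ W x)
    (hV1 : ∀ x ∈ Set.Ici x₀, DifferentiableAt ℝ V x)
    (gW gV : ℝ → ℝ)
    (hgW : ∀ x ∈ Set.Ioi x₀, HasDerivAt (fun y => |deriv W y| ^ (p - 2) * deriv W y) (gW x) x)
    (hgV : ∀ x ∈ Set.Ioi x₀, HasDerivAt (fun y => |deriv V y| ^ (p - 2) * deriv V y) (gV x) x)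
    (hWsup : ∀ x ∈ Set.Ioi x₀, gW x ≤ a x * |W x| ^ (p - 2) * W x)
    (hVsub : ∀ x ∈ Set.Ioi x₀, a x * |V x| ^ (p - 2) * V x ≤ gV x)
    (heq : W x₀ = V x₀)
    (hWlim : Tendsto W atTop (nhds 0)) (hVlim : Tendsto V atTop (nhds 0)) :
    ∀ x ∈ Set.Ici x₀, V x ≤ W x := by
  intro x₁ hx₁
  by_contra! hlt
  obtain ⟨c, hc, hmax⟩ := exists_isMaxOn_Ici_of_tendsto_zero
    (fun x hx => ((hV1 x hx).sub (hW1 x hx)).continuousAt.continuousWithinAt)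
    (sub_zero (0 : ℝ) ▸ hVlim.sub hWlim) hx₁ (sub_pos.2 hlt)
  have hu_pos : 0 < (V - W) c := (sub_pos.2 hlt).trans_le (hmax hx₁)
  have hx₀c : x₀ < c := hc.lt_of_ne (by rintro rfl; simp [heq] at hu_pos)
  have hderiv : deriv V c = deriv W c := by
    have := (hmax.isLocalMax (Ici_mem_nhds hx₀c)).deriv_eq_zero
    rwa [deriv_sub (hV1 c hc) (hW1 c hc), sub_eq_zero] at this
  obtain ⟨d, hcd, hd⟩ := mem_nhdsGE_iff_exists_Icc_subset.1 <| nhdsWithin_le_nhds <|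
    (eventually_gt_nhds hx₀c).and
      (continuousAt_const.eventually_lt ((hV1 c hc).sub (hW1 c hc)).continuousAt hu_pos)
  have hflux_lt : ∀ x ∈ Ioo c d, gW x < gV x := fun x hx => by
    obtain ⟨hx₀x, hWV⟩ := hd (Ioo_subset_Icc_self hx)
    have := mul_lt_mul_of_pos_left (strictMono_pLaplacianFlux hp (sub_pos.1 hWV)) (ha_pos x hx₀x)
    simp only [pLaplacianFlux] at this
    linarith [hWsup x hx₀x, hVsub x hx₀x]
  have hmono := strictMonoOn_sub_of_deriv_pLaplacianFlux_lt hp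
    (fun x hx => hV1 x (hd hx).1.le) (fun x hx => hW1 x (hd hx).1.le)
    (fun x hx => hgV x (hd hx).1) (fun x hx => hgW x (hd hx).1) hflux_lt hderiv
  exact (hmono (left_mem_Icc.2 hcd.le) (right_mem_Icc.2 hcd.le) hcd).not_ge
    (hmax (hx₀c.trans hcd).le)

theorem stmt2 (p x₀ : ℝ) (hp : 1 < p) (a W V : ℝ → ℝ)
    (ha_cont : ContinuousOn a (Set.Ici x₀))
    (ha_bdd : ∃ C, ∀ x ∈ Set.Ici x₀, |a x| ≤ C)
    (ha_pos : ∀ x > x₀, 0 < a x)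
    (hW1 : ∀ x ∈ Set.Ici x₀, DifferentiableAt ℝ W x)
    (hV1 : ∀ x ∈ Set.Ici x₀, DifferentiableAt ℝ V x)
    (hW'b : ∃ C, ∀ x ∈ Set.Ici x₀, |deriv W x| ≤ C)
    (hV'b : ∃ C, ∀ x ∈ Set.Ici x₀, |deriv V x| ≤ C)
    (gW gV : ℝ → ℝ)
    (hgW : ∀ x ∈ Set.Ioi x₀, HasDerivAt (fun y => |deriv W y| ^ (p - 2) * deriv W y) (gW x) x)
    (hgV : ∀ x ∈ Set.Ioi x₀, HasDerivAt (fun y => |deriv V y| ^ (p - 2) * deriv V y) (gV x) x)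
    (hWsup : ∀ x ∈ Set.Ioi x₀, gW x ≤ a x * |W x| ^ (p - 2) * W x)
    (hVsub : ∀ x ∈ Set.Ioi x₀, a x * |V x| ^ (p - 2) * V x ≤ gV x)
    (heq : W x₀ = V x₀)
    (hWlim : Tendsto W atTop (nhds 0)) (hVlim : Tendsto V atTop (nhds 0)) :
    ∀ x ∈ Set.Ici x₀, V x ≤ W x :=
  stmt2_general p x₀ hp a W V ha_pos hW1 hV1 gW gV hgW hgV hWsup hVsub heq hWlim hVlim
end

section
/- If y : [x₀, x₀ + h] → ℝ is C¹ with |y'|^{p-2}y' differentiable satisfying (|y'|^{p-2}y')' = x^p |y|^{p-2} y on [x₀, x₀+h] with x₀ ≥ 0, y(x₀) = 0 and y(x₀ + h) ≥ 0, then y ≥ 0 on [x₀, x₀ + h]. -/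
open Real Filter Topology

theorem stmt3 (p x₀ h : ℝ) (hp : 1 < p) (hx₀ : 0 ≤ x₀) (hh : 0 < h) (y : ℝ → ℝ)
    (hy : ∀ x ∈ Set.Icc x₀ (x₀ + h), DifferentiableAt ℝ y x)
    (hode : ∀ x ∈ Set.Icc x₀ (x₀ + h),
      HasDerivAt (fun t => |deriv y t| ^ (p - 2) * deriv y t)
        (x ^ p * |y x| ^ (p - 2) * y x) x)
    (h0 : y x₀ = 0) (hend : 0 ≤ y (x₀ + h)) :
    ∀ x ∈ Set.Icc x₀ (x₀ + h), 0 ≤ y x := by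
  by_contra hcon
  push_neg at hcon
  obtain ⟨x, hx, hxneg⟩ := hcon
  have hcont : ContinuousOn y (Set.Icc x₀ (x₀ + h)) := fun t ht =>
    (hy t ht).continuousAt.continuousWithinAt
  obtain ⟨c, hc, hmin⟩ := (isCompact_Icc).exists_isMinOn
    (Set.nonempty_Icc.mpr (by linarith)) hcont
  have hyc : y c < 0 := lt_of_le_of_lt (hmin hx) hxneg
  have hc1 : x₀ < c := by
    rcases lt_or_eq_of_le hc.1 with h' | h'
    · exact h'
    · exfalso; rw [← h', h0] at hyc; linarith
  have hc2 : c < x₀ + h := by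
    rcases lt_or_eq_of_le hc.2 with h' | h'
    · exact h'
    · exfalso; rw [h'] at hyc; linarith
  have hlocmin : IsLocalMin y c := hmin.isLocalMin (Icc_mem_nhds hc1 hc2)
  have hdy0 : deriv y c = 0 := hlocmin.deriv_eq_zero
  set g : ℝ → ℝ := fun t => |deriv y t| ^ (p - 2) * deriv y t with hgdef
  have hgc : g c = 0 := by simp [hgdef, hdy0]
  have hcpos : 0 < c := lt_of_le_of_lt hx₀ hc1
  have hL : c ^ p * |y c| ^ (p - 2) * y c < 0 := by
    have h1 : (0:ℝ) < c ^ p := Real.rpow_pos_of_pos hcpos p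
    have h2 : (0:ℝ) < |y c| ^ (p - 2) :=
      Real.rpow_pos_of_pos (abs_pos.mpr (ne_of_lt hyc)) _
    exact mul_neg_of_pos_of_neg (mul_pos h1 h2) hyc
  have hder : HasDerivAt g (c ^ p * |y c| ^ (p - 2) * y c) c := hode c hc
  have hslope := hasDerivAt_iff_tendsto_slope.mp hder
  have hev : ∀ᶠ t in 𝓝[≠] c, slope g c t < 0 := hslope.eventually_lt_const hL
  have hev' : ∀ᶠ t in 𝓝[<] c, slope g c t < 0 :=
    hev.filter_mono (nhdsWithin_mono c fun t ht => ne_of_lt ht)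
  have hev2 : ∀ᶠ t in 𝓝[<] c, x₀ < t :=
    eventually_nhdsWithin_of_eventually_nhds (eventually_gt_nhds hc1)
  obtain ⟨a, ha, haIoo⟩ := mem_nhdsLT_iff_exists_Ioo_subset.mp (hev'.and hev2)
  -- on Ioo a c, slope g c t < 0 and x₀ < t
  set a' : ℝ := max a x₀ with ha'def
  have ha'c : a' < c := max_lt ha hc1
  have ha'x₀ : x₀ ≤ a' := le_max_right _ _
  have hderivpos : ∀ t ∈ Set.Ioo a' c, 0 < deriv y t := by
    intro t ht
    have htIoo : t ∈ Set.Ioo a c := ⟨lt_of_le_of_lt (le_max_left a x₀) ht.1, ht.2⟩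
    have hst := (haIoo htIoo).1
    have hgt : 0 < g t := by
      have hslope_eq : slope g c t = (g t - g c) / (t - c) := by
        rw [slope_def_field]
      rw [hslope_eq, hgc, sub_zero] at hst
      have htc : t - c < 0 := sub_neg.mpr ht.2
      by_contra hle
      push_neg at hle
      have : 0 ≤ g t / (t - c) := by rw [div_nonneg_iff]; right; exact ⟨hle, le_of_lt htc⟩
      linarith
    by_contra hle
    push_neg at hle
    rcases lt_or_eq_of_le hle with hlt | heq
    · have h2 : (0:ℝ) < |deriv y t| ^ (p - 2) :=
        Real.rpow_pos_of_pos (abs_pos.mpr (ne_of_lt hlt)) _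
      have : g t < 0 := mul_neg_of_pos_of_neg h2 hlt
      linarith
    · have : g t = 0 := by simp [hgdef, heq]
      linarith
  have hsub : Set.Icc a' c ⊆ Set.Icc x₀ (x₀ + h) :=
    Set.Icc_subset_Icc ha'x₀ (le_of_lt hc2)
  have hmono : StrictMonoOn y (Set.Icc a' c) := by
    apply strictMonoOn_of_deriv_pos (convex_Icc a' c)
      (hcont.mono hsub)
    intro t ht
    rw [interior_Icc] at ht
    exact hderivpos t ht
  have hlt : y a' < y c :=
    hmono (Set.left_mem_Icc.mpr (le_of_lt ha'c)) (Set.right_mem_Icc.mpr (le_of_lt ha'c)) ha'c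
  have : y c ≤ y a' := hmin (hsub (Set.left_mem_Icc.mpr (le_of_lt ha'c)))
  linarith
end

section
/- Let p > 1 and let y : [x₀, ∞) → ℝ solve (|y'|^{p-2}y')' = x^p |y|^{p-2} y with x₀ ≥ 0, y(x₀) = 0 and y'(x₀) = 0. Then y is identically zero on [x₀, ∞). -/
/-!
Along a solution the energy `(p-1)/p |y'|^p - x^p |y|^p / p` has derivative `-x^(p-1) |y|^p ≤ 0`;
since it vanishes at `x₀`, it stays nonpositive, i.e. `(p-1) |y'|^p ≤ x^p |y|^p`. On every
bounded interval `[x₀, b]` this is a linear bound `|y'| ≤ K |y|`, and Grönwall's inequality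
forces `y = 0` there.
-/

open Real Set

/-- The map `φ_p(a) = |a|^(p-2) a` of the `p`-Laplacian. -/
noncomputable def phiP (p a : ℝ) : ℝ := |a| ^ (p - 2) * a

section phiP

variable {p : ℝ}

lemma abs_phiP (hp : p ≠ 1) (a : ℝ) : |phiP p a| = |a| ^ (p - 1) := by
  rcases eq_or_ne a 0 with rfl | ha
  · simp [phiP, zero_rpow (sub_ne_zero.2 hp)]
  · rw [phiP, abs_mul, abs_of_nonneg (rpow_nonneg (abs_nonneg a) _),
      ← rpow_add_one (abs_pos.2 ha).ne']
    ring_nf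

lemma abs_phiP_rpow_conj (hp : p ≠ 1) (a : ℝ) : |phiP p a| ^ (p / (p - 1)) = |a| ^ p := by
  have hp1 : p - 1 ≠ 0 := sub_ne_zero.2 hp
  rw [abs_phiP hp, ← rpow_mul (abs_nonneg a), mul_div_cancel₀ p hp1]

lemma phiP_conj_phiP (hp : p ≠ 1) (a : ℝ) : phiP (p / (p - 1)) (phiP p a) = a := by
  rcases eq_or_ne a 0 with rfl | ha
  · simp [phiP]
  · have hp1 : p - 1 ≠ 0 := sub_ne_zero.2 hp
    have hexp : (p - 1) * (p / (p - 1) - 2) = 2 - p := by field_simp; ring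
    rw [phiP, abs_phiP hp, ← rpow_mul (abs_nonneg a), hexp, phiP, ← mul_assoc,
      ← rpow_add (abs_pos.2 ha), show 2 - p + (p - 2) = 0 by ring, rpow_zero, one_mul]

lemma hasDerivAt_abs_rpow_comp {f : ℝ → ℝ} {f' x : ℝ} (hp : 1 < p) (hf : HasDerivAt f f' x) :
    HasDerivAt (fun t => |f t| ^ p) (p * phiP p (f x) * f') x := by
  simpa [Function.comp_def, phiP, mul_assoc] using (hasDerivAt_abs_rpow (f x) hp).comp x hf

end phiP

/-- The energy of `(φ_p(y'))' = Q φ_p(y)`, written through `φ_p(y')` (which is differentiable,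
unlike `y'`) and the conjugate exponent: `|φ_p(y')|^(p/(p-1)) = |y'|^p`. -/
noncomputable def energy (p : ℝ) (Q y : ℝ → ℝ) (t : ℝ) : ℝ :=
  (p - 1) / p * |phiP p (deriv y t)| ^ (p / (p - 1)) - Q t * |y t| ^ p / p

section energy

variable {p : ℝ} {Q y : ℝ → ℝ}

lemma hasDerivAt_energy {Q' x : ℝ} (hp : 1 < p) (hy : DifferentiableAt ℝ y x)
    (hQ : HasDerivAt Q Q' x)
    (hode : HasDerivAt (fun t => phiP p (deriv y t)) (Q x * phiP p (y x)) x) :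
    HasDerivAt (energy p Q y) (-(Q' * |y x| ^ p / p)) x := by
  have hp0 : p ≠ 0 := by linarith
  have hp1 : p - 1 ≠ 0 := by linarith
  have hq : 1 < p / (p - 1) := (one_lt_div (by linarith)).2 (by linarith)
  have hw := hasDerivAt_abs_rpow_comp hq hode
  have hyp := hasDerivAt_abs_rpow_comp hp hy.hasDerivAt
  refine ((hw.const_mul ((p - 1) / p)).sub ((hQ.mul hyp).div_const p)).congr_deriv ?_
  rw [phiP_conj_phiP hp.ne']
  field_simp
  ring

lemma energy_antitoneOn {s : Set ℝ} {Q' : ℝ → ℝ} (hs : Convex ℝ s) (hp : 1 < p)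
    (hy : ∀ x ∈ s, DifferentiableAt ℝ y x) (hQ : ∀ x ∈ s, HasDerivAt Q (Q' x) x)
    (hQ' : ∀ x ∈ s, 0 ≤ Q' x)
    (hode : ∀ x ∈ s, HasDerivAt (fun t => phiP p (deriv y t)) (Q x * phiP p (y x)) x) :
    AntitoneOn (energy p Q y) s := by
  have hE x (hx : x ∈ s) := hasDerivAt_energy hp (hy x hx) (hQ x hx) (hode x hx)
  refine antitoneOn_of_hasDerivWithinAt_nonpos hs
    (fun x hx => (hE x hx).continuousAt.continuousWithinAt)
    (fun x hx => (hE x (interior_subset hx)).hasDerivWithinAt) fun x hx => ?_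
  have := hQ' x (interior_subset hx)
  have : 0 < p := by linarith
  have : 0 ≤ |y x| ^ p := rpow_nonneg (abs_nonneg _) _
  rw [neg_nonpos]
  positivity

lemma energy_eq_zero (hp : p ≠ 0) {x : ℝ} (hy : y x = 0) (hy' : deriv y x = 0) :
    energy p Q y x = 0 := by
  rcases eq_or_ne p 1 with rfl | hp1
  · simp [energy, hy]
  · simp [energy, phiP, hy, hy', zero_rpow hp, zero_rpow (div_ne_zero hp (sub_ne_zero.2 hp1))]

lemma mul_abs_deriv_rpow_le_of_energy_nonpos (hp : 1 < p) {x : ℝ} (h : energy p Q y x ≤ 0) :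
    (p - 1) * |deriv y x| ^ p ≤ Q x * |y x| ^ p := by
  have hp0 : 0 < p := by linarith
  rw [energy, abs_phiP_rpow_conj hp.ne'] at h
  have h' := mul_nonpos_of_nonneg_of_nonpos hp0.le h
  rw [mul_sub, ← mul_assoc, mul_div_cancel₀ _ hp0.ne', mul_div_cancel₀ _ hp0.ne'] at h'
  linarith

end energy

lemma abs_le_mul_abs_of_mul_rpow_le {p c B u v : ℝ} (hp : 0 < p) (hc : 0 < c) (hB : 0 ≤ B)
    (h : c * |u| ^ p ≤ B ^ p * |v| ^ p) : |u| ≤ B / c ^ p⁻¹ * |v| := by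
  have hcp : 0 < c ^ p⁻¹ := rpow_pos_of_pos hc _
  have hK : 0 ≤ B / c ^ p⁻¹ * |v| := by positivity
  rw [← rpow_le_rpow_iff (abs_nonneg u) hK hp, mul_rpow (by positivity) (abs_nonneg v),
    div_rpow hB hcp.le, ← rpow_mul hc.le, inv_mul_cancel₀ hp.ne', rpow_one, div_mul_eq_mul_div,
    le_div_iff₀' hc]
  exact h

theorem stmt4 (p x₀ : ℝ) (hp : 1 < p) (hx₀ : 0 ≤ x₀) (y : ℝ → ℝ)
    (hy : ∀ x ∈ Set.Ici x₀, DifferentiableAt ℝ y x)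
    (hode : ∀ x ∈ Set.Ici x₀,
      HasDerivAt (fun t => |deriv y t| ^ (p - 2) * deriv y t)
        (x ^ p * |y x| ^ (p - 2) * y x) x)
    (h0 : y x₀ = 0) (h1 : deriv y x₀ = 0) :
    ∀ x ∈ Set.Ici x₀, y x = 0 := by
  have hp0 : 0 < p := by linarith
  have hanti : AntitoneOn (energy p (· ^ p) y) (Ici x₀) :=
    energy_antitoneOn (convex_Ici x₀) hp hy (fun x _ => hasDerivAt_rpow_const (Or.inr hp.le))
      (fun x hx => by have := le_trans hx₀ hx; positivity)
      (fun x hx => by simpa only [phiP, mul_assoc] using hode x hx)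
  have hbound x (hx : x ∈ Ici x₀) : (p - 1) * |deriv y x| ^ p ≤ x ^ p * |y x| ^ p :=
    mul_abs_deriv_rpow_le_of_energy_nonpos hp <|
      energy_eq_zero hp0.ne' h0 h1 ▸ hanti self_mem_Ici hx hx
  intro b hb
  refine eq_zero_of_abs_deriv_le_mul_abs_self_of_eq_zero_right (K := b / (p - 1) ^ p⁻¹)
    (fun t ht => (hy t ht.1).continuousAt.continuousWithinAt)
    (fun t ht => (hy t ht.1).hasDerivAt.hasDerivWithinAt) h0 (fun t ht => ?_) b ⟨hb, le_rfl⟩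
  have ht0 : 0 ≤ t := le_trans hx₀ ht.1
  refine abs_le_mul_abs_of_mul_rpow_le hp0 (by linarith) (le_trans ht0 ht.2.le) ?_
  calc (p - 1) * |deriv y t| ^ p ≤ t ^ p * |y t| ^ p := hbound t ht.1
    _ ≤ b ^ p * |y t| ^ p := by gcongr; exact ht.2.le
end

section
/- The function w(x) = e^{-(x² + 2x)} satisfies |w'(x)|^{p-2}w''(x) ≥ x^p w(x)^{p-1} for all x ≥ 0 and any p > 1. -/
/-! Writing `u = 2x + 2 ≥ 2`, one has `|w'| = u w` and `w'' = (u² - 2) w`, so both sides are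
multiples of `w ^ (p - 1)` and the claim reduces to `x ^ p ≤ u ^ (p - 2) (u² - 2)`. This holds
because `x ^ p ≤ (u / 2) ^ p ≤ u ^ p / 2` for `p ≥ 1`, while `u² ≥ 4` gives
`2 u ^ (p - 2) ≤ u ^ p / 2`. -/

open Real Filter

lemma hasDerivAt_exp_neg_sq_add_two_mul (t : ℝ) :
    HasDerivAt (fun s : ℝ => exp (-(s ^ 2 + 2 * s)))
      (-(2 * t + 2) * exp (-(t ^ 2 + 2 * t))) t := by
  have hinner : HasDerivAt (fun s : ℝ => -(s ^ 2 + 2 * s)) (-(2 * t + 2)) t :=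
    ((hasDerivAt_pow 2 t).add ((hasDerivAt_id t).const_mul 2)).neg.congr_deriv (by simp)
  simpa [mul_comm] using hinner.exp

lemma deriv_exp_neg_sq_add_two_mul :
    deriv (fun t : ℝ => exp (-(t ^ 2 + 2 * t)))
      = fun t => -(2 * t + 2) * exp (-(t ^ 2 + 2 * t)) :=
  funext fun t => (hasDerivAt_exp_neg_sq_add_two_mul t).deriv

lemma deriv_deriv_exp_neg_sq_add_two_mul (x : ℝ) :
    deriv (deriv (fun t : ℝ => exp (-(t ^ 2 + 2 * t)))) x
      = ((2 * x + 2) ^ 2 - 2) * exp (-(x ^ 2 + 2 * x)) := by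
  rw [deriv_exp_neg_sq_add_two_mul]
  have hlin : HasDerivAt (fun t : ℝ => -(2 * t + 2)) (-2) x :=
    (((hasDerivAt_id x).const_mul 2).add_const 2).neg.congr_deriv (by simp)
  exact ((hlin.mul (hasDerivAt_exp_neg_sq_add_two_mul x)).congr_deriv (by ring)).deriv

lemma rpow_le_rpow_sub_two_mul_sq_sub_two {p x u : ℝ} (hp : 1 ≤ p) (hx : 0 ≤ x)
    (hxu : 2 * x ≤ u) (hu : 2 ≤ u) :
    x ^ p ≤ u ^ (p - 2) * (u ^ 2 - 2) := by
  have hu0 : 0 < u := by linarith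
  have hsplit : u ^ p = u ^ (p - 2) * u ^ 2 := by
    rw [← rpow_natCast u 2, ← rpow_add hu0]
    norm_num
  have hxp : 2 * x ^ p ≤ u ^ p := by
    have h2p : (2 : ℝ) ≤ 2 ^ p := by
      simpa using rpow_le_rpow_of_exponent_le (by norm_num : (1 : ℝ) ≤ 2) hp
    calc 2 * x ^ p ≤ 2 ^ p * x ^ p := by gcongr
      _ = (2 * x) ^ p := (mul_rpow (by norm_num) hx).symm
      _ ≤ u ^ p := by gcongr
  have hlow : 4 * u ^ (p - 2) ≤ u ^ p := by
    rw [hsplit]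
    have : (4 : ℝ) ≤ u ^ 2 := by nlinarith
    have := rpow_nonneg hu0.le (p - 2)
    nlinarith
  nlinarith

theorem stmt5 (p : ℝ) (hp : 1 < p) (x : ℝ) (hx : 0 ≤ x) :
    x ^ p * (Real.exp (-(x ^ 2 + 2 * x))) ^ (p - 1) ≤
      |deriv (fun t : ℝ => Real.exp (-(t ^ 2 + 2 * t))) x| ^ (p - 2) *
        deriv (deriv (fun t : ℝ => Real.exp (-(t ^ 2 + 2 * t)))) x := by
  set E := exp (-(x ^ 2 + 2 * x))
  set u := 2 * x + 2
  have hE : 0 < E := exp_pos _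
  have hu : 0 < u := by positivity
  have habs : |deriv (fun t : ℝ => exp (-(t ^ 2 + 2 * t))) x| = u * E := by
    rw [deriv_exp_neg_sq_add_two_mul, abs_mul, abs_neg, abs_of_pos hu, abs_of_pos hE]
  rw [habs, deriv_deriv_exp_neg_sq_add_two_mul, mul_rpow hu.le hE.le,
    show p - 1 = (p - 2) + 1 by ring, rpow_add hE, rpow_one]
  calc x ^ p * (E ^ (p - 2) * E)
      ≤ u ^ (p - 2) * (u ^ 2 - 2) * (E ^ (p - 2) * E) := by
        gcongr
        exact rpow_le_rpow_sub_two_mul_sq_sub_two hp.le hx (by linarith) (by linarith)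
    _ = u ^ (p - 2) * E ^ (p - 2) * ((u ^ 2 - 2) * E) := by ring
end

section
/- Gaussian upper bound via comparison: let p ≥ 1, k > 0, and suppose U : (-∞, -M] → (0, ∞) is C¹, U and U' bounded, U(x) → 0 as x → -∞, |U'|^{p-2}U' differentiable with (|U'|^{p-2}U')' = V(x)^p U(x)^{p-1} where V(x) ≥ 2k|x| for x ≤ -M. If W(x) = C e^{-k x²} with C chosen so W(-M) = U(-M) and M is large enough that (|W'|^{p-2}W')' ≤ V^p W^{p-1} on (-∞, -M], then U(x) ≤ W(x) = C e^{-k x²} for all x ≤ -M. -/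
/-!
Write `W x = C e^{-k x²}` and `φ(t) = |t|^{p-2} t`. If `U - W` were positive somewhere on
`(-∞, -M]`, then, as it vanishes at `-∞` and is `≤ 0` at `-M`, it would attain a positive maximum
at some `x₀ < -M`, where `U' = W'`. Up to the first point `x₂ > x₀` where `U - W ≤ 0` we have
`U ≥ W`, so `(φ(U'))' = V^p U^{p-1} ≥ V^p W^{p-1} ≥ (φ(W'))'`; hence `φ(U') ≥ φ(W')` there, and,
`φ` being strictly increasing for `p > 1`, `U' ≥ W'`. So `U - W` increases from its positive value
at `x₀` to a nonpositive value at `x₂`, a contradiction. For `p = 1`, `φ(U') = sign U'` is bounded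
while its derivative `V ≥ 2kM` is not small, which is impossible on a half-line.
-/

open Real Filter Set Topology

lemma strictMono_abs_rpow_sub_two_mul_self {p : ℝ} (hp : 1 < p) :
    StrictMono fun t : ℝ => |t| ^ (p - 2) * t := by
  refine strictMono_of_odd_strictMonoOn_nonneg (fun t => by simp only [abs_neg]; ring) ?_
  refine (strictMonoOn_rpow_Ici_of_exponent_pos (by linarith : 0 < p - 1)).congr fun t ht => ?_
  rcases (mem_Ici.1 ht).eq_or_lt with rfl | ht
  · simp [zero_rpow (by linarith : p - 1 ≠ 0)]
  · rw [abs_of_pos ht, ← rpow_add_one ht.ne']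
    ring_nf

lemma abs_abs_rpow_neg_one_mul_self_le_one (t : ℝ) : |(|t| ^ (-1 : ℝ) * t)| ≤ 1 := by
  rcases eq_or_ne t 0 with rfl | ht
  · simp
  · rw [abs_mul, abs_of_nonneg (rpow_nonneg (abs_nonneg t) _), ← rpow_add_one (abs_ne_zero.2 ht)]
    norm_num

lemma DifferentiableAt.abs_rpow_mul_self {f : ℝ → ℝ} {x : ℝ} (q : ℝ)
    (hf : DifferentiableAt ℝ f x) (hx : f x ≠ 0) :
    DifferentiableAt ℝ (fun y => |f y| ^ q * f y) x :=
  ((hf.abs hx).rpow_const (Or.inl (abs_ne_zero.2 hx))).mul hf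

lemma hasDerivAt_gaussian (k C t : ℝ) :
    HasDerivAt (fun t => C * exp (-(k * t ^ 2))) (-(2 * k * t) * (C * exp (-(k * t ^ 2)))) t := by
  refine ((((hasDerivAt_pow 2 t).const_mul k).fun_neg.exp).const_mul C).congr_deriv ?_
  norm_num
  ring

lemma tendsto_gaussian_atBot {k : ℝ} (hk : 0 < k) (C : ℝ) :
    Tendsto (fun t => C * exp (-(k * t ^ 2))) atBot (𝓝 0) := by
  have := (tendsto_rpow_abs_mul_exp_neg_mul_sq_cocompact hk 0).mono_left atBot_le_cocompact
  simpa using this.const_mul C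

lemma monotoneOn_of_hasDerivAt_nonneg {D : Set ℝ} (hD : Convex ℝ D) {f f' : ℝ → ℝ}
    (hf : ∀ x ∈ D, HasDerivAt f (f' x) x) (hf' : ∀ x ∈ interior D, 0 ≤ f' x) :
    MonotoneOn f D :=
  monotoneOn_of_hasDerivWithinAt_nonneg hD (fun x hx => (hf x hx).continuousAt.continuousWithinAt)
    (fun x hx => (hf x (interior_subset hx)).hasDerivWithinAt) hf'

lemma not_forall_abs_le_of_le_hasDerivAt {g g' : ℝ → ℝ} {b c : ℝ} (B : ℝ) (hc : 0 < c)
    (hg : ∀ x ≤ b, HasDerivAt g (g' x) x) (hg' : ∀ x ≤ b, c ≤ g' x) :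
    ¬ ∀ x ≤ b, |g x| ≤ B := by
  intro hB
  have hmono : MonotoneOn (fun x => g x - c * x) (Iic b) :=
    monotoneOn_of_hasDerivAt_nonneg (convex_Iic b)
      (fun x hx => (hg x hx).sub ((hasDerivAt_id x).const_mul c)) fun x hx => by
        rw [interior_Iic] at hx
        linarith [hg' x hx.le]
  have hB0 : 0 ≤ B := (abs_nonneg _).trans (hB b le_rfl)
  set a := b - (2 * B + 1) / c
  have hab : a ≤ b := sub_le_self _ (by positivity)
  have hgap : c * (b - a) = 2 * B + 1 := by simp only [a]; field_simp; ring
  have hincr : g a - c * a ≤ g b - c * b := hmono hab (le_refl b) hab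
  linarith [abs_le.1 (hB a hab), abs_le.1 (hB b le_rfl)]

section Comparison

variable {φ U W U' W' Fu Fw : ℝ → ℝ}

lemma monotoneOn_sub_of_flux_le {a b : ℝ} (hφ : StrictMono φ)
    (hU : ∀ x ∈ Icc a b, HasDerivAt U (U' x) x) (hW : ∀ x ∈ Icc a b, HasDerivAt W (W' x) x)
    (hUf : ∀ x ∈ Icc a b, HasDerivAt (fun y => φ (U' y)) (Fu x) x)
    (hWf : ∀ x ∈ Icc a b, HasDerivAt (fun y => φ (W' y)) (Fw x) x)
    (hF : ∀ x ∈ Ioo a b, Fw x ≤ Fu x) (ha : W' a ≤ U' a) :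
    MonotoneOn (U - W) (Icc a b) := by
  have hflux : MonotoneOn (fun y => φ (U' y) - φ (W' y)) (Icc a b) :=
    monotoneOn_of_hasDerivAt_nonneg (convex_Icc a b) (fun x hx => (hUf x hx).sub (hWf x hx))
      fun x hx => by
        rw [interior_Icc] at hx
        exact sub_nonneg.2 (hF x hx)
  have hderiv : ∀ x ∈ Icc a b, W' x ≤ U' x := fun x hx =>
    hφ.le_iff_le.1 <| sub_nonneg.1 <| (sub_nonneg.2 (hφ.monotone ha)).trans <|
      hflux (left_mem_Icc.2 (hx.1.trans hx.2)) hx hx.1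
  exact monotoneOn_of_hasDerivAt_nonneg (convex_Icc a b) (fun x hx => (hU x hx).sub (hW x hx))
    fun x hx => sub_nonneg.2 (hderiv x (interior_subset hx))

lemma forall_le_of_flux_le {b : ℝ} (hφ : StrictMono φ)
    (hU : ∀ x ≤ b, HasDerivAt U (U' x) x) (hW : ∀ x ≤ b, HasDerivAt W (W' x) x)
    (hUf : ∀ x ≤ b, HasDerivAt (fun y => φ (U' y)) (Fu x) x)
    (hWf : ∀ x ≤ b, HasDerivAt (fun y => φ (W' y)) (Fw x) x)
    (hF : ∀ x ≤ b, W x ≤ U x → Fw x ≤ Fu x)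
    (hlim : Tendsto (fun x => U x - W x) atBot (𝓝 0)) (hb : U b ≤ W b) :
    ∀ x ≤ b, U x ≤ W x := by
  by_contra! ⟨x₁, hx₁b, hx₁⟩
  have hcont : ContinuousOn (U - W) (Iic b) := fun x hx =>
    ((hU x hx).sub (hW x hx)).continuousAt.continuousWithinAt
  obtain ⟨x₀, hx₀b, hmax⟩ : ∃ x₀ ∈ Iic b, IsMaxOn (U - W) (Iic b) x₀ := by
    refine hcont.exists_isMaxOn' isClosed_Iic hx₁b ?_
    rw [cocompact_eq_atBot_atTop, inf_sup_right, (disjoint_atTop_principal_Iic b).eq_bot,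
      sup_bot_eq]
    exact (hlim.eventually (ge_mem_nhds (sub_pos.2 hx₁))).filter_mono inf_le_left
  have hpos : 0 < U x₀ - W x₀ := (sub_pos.2 hx₁).trans_le (hmax hx₁b)
  have hx₀ : x₀ < b := (mem_Iic.1 hx₀b).lt_of_ne (by rintro rfl; linarith)
  have hcrit : U' x₀ - W' x₀ = 0 :=
    (hmax.isLocalMax (Iic_mem_nhds hx₀)).hasDerivAt_eq_zero ((hU x₀ hx₀b).sub (hW x₀ hx₀b))
  -- `x₂` is the first point of `[x₀, b]` where `U ≤ W`.
  obtain ⟨x₂, ⟨⟨hx₀₂, hx₂b⟩, hx₂⟩, hfirst⟩ :=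
    (isCompact_Icc.of_isClosed_subset
      ((hcont.mono (Icc_subset_Iic_self (a := x₀))).preimage_isClosed_of_isClosed isClosed_Icc
        isClosed_Iic) inter_subset_left).exists_isLeast
      ⟨b, ⟨hx₀.le, le_rfl⟩, show U b - W b ≤ 0 by linarith⟩
  have hx₂ : U x₂ - W x₂ ≤ 0 := hx₂
  have hsub : Icc x₀ x₂ ⊆ Iic b := fun x hx => hx.2.trans hx₂b
  have hUW : ∀ x ∈ Ioo x₀ x₂, W x ≤ U x := fun x hx => by
    by_contra! hlt
    exact (hfirst ⟨⟨hx.1.le, hx.2.le.trans hx₂b⟩, show U x - W x ≤ 0 by linarith⟩).not_gt hx.2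
  have hmono := monotoneOn_sub_of_flux_le hφ (fun x hx => hU x (hsub hx))
    (fun x hx => hW x (hsub hx)) (fun x hx => hUf x (hsub hx)) (fun x hx => hWf x (hsub hx))
    (fun x hx => hF x (hsub (Ioo_subset_Icc_self hx)) (hUW x hx)) (by linarith)
  have hincr : U x₀ - W x₀ ≤ U x₂ - W x₂ :=
    hmono (left_mem_Icc.2 hx₀₂) (right_mem_Icc.2 hx₀₂) hx₀₂
  linarith

end Comparison

theorem stmt11_general (p k M C : ℝ) (hp : 1 ≤ p) (hk : 0 < k) (hM : 0 < M) (hC : 0 < C)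
    (U V : ℝ → ℝ)
    (hUC1 : ∀ x ≤ -M, DifferentiableAt ℝ U x)
    (hUlim : Tendsto U atBot (nhds 0))
    (hode : ∀ x ≤ -M, HasDerivAt (fun y => |deriv U y| ^ (p - 2) * deriv U y)
      (V x ^ p * U x ^ (p - 1)) x)
    (hV : ∀ x ≤ -M, 2 * k * |x| ≤ V x)
    (hmatch : C * Real.exp (-(k * M ^ 2)) = U (-M))
    (hsup : ∀ x ≤ -M,
      deriv (fun y => |deriv (fun t : ℝ => C * Real.exp (-(k * t ^ 2))) y| ^ (p - 2) *
          deriv (fun t : ℝ => C * Real.exp (-(k * t ^ 2))) y) x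
        ≤ V x ^ p * (C * Real.exp (-(k * x ^ 2))) ^ (p - 1)) :
    ∀ x ≤ -M, U x ≤ C * Real.exp (-(k * x ^ 2)) := by
  have hVM : ∀ x ≤ -M, 2 * k * M ≤ V x := fun x hx =>
    le_trans (by rw [abs_of_neg (by linarith)]; nlinarith) (hV x hx)
  obtain rfl | hp := hp.eq_or_lt
  · norm_num at hode
    exact absurd (fun x _ => abs_abs_rpow_neg_one_mul_self_le_one (deriv U x))
      (not_forall_abs_le_of_le_hasDerivAt 1 (by positivity) hode hVM)
  have hW := hasDerivAt_gaussian k C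
  rw [show deriv (fun t : ℝ => C * exp (-(k * t ^ 2))) = _ from funext fun t => (hW t).deriv]
    at hsup
  refine forall_le_of_flux_le (strictMono_abs_rpow_sub_two_mul_self hp)
    (fun x hx => (hUC1 x hx).hasDerivAt) (fun x _ => hW x) hode
    (fun x hx => (DifferentiableAt.abs_rpow_mul_self _ (by fun_prop) ?_).hasDerivAt) ?_
    (by simpa using hUlim.sub (tendsto_gaussian_atBot hk C)) (by rw [neg_sq, hmatch])
  · have : 0 < -(2 * k * x) := by nlinarith
    positivity
  · intro x hx hWU
    refine (hsup x hx).trans (mul_le_mul_of_nonneg_left ?_ ?_)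
    · exact rpow_le_rpow (by positivity) hWU (by linarith)
    · exact rpow_nonneg ((by positivity : (0 : ℝ) ≤ 2 * k * M).trans (hVM x hx)) p

theorem stmt11 (p k M C : ℝ) (hp : 1 ≤ p) (hk : 0 < k) (hM : 0 < M) (hC : 0 < C)
    (U V : ℝ → ℝ)
    (hUpos : ∀ x ≤ -M, 0 < U x)
    (hUbdd : ∃ B, ∀ x ≤ -M, |U x| ≤ B ∧ |deriv U x| ≤ B)
    (hUC1 : ∀ x ≤ -M, DifferentiableAt ℝ U x)
    (hUlim : Tendsto U atBot (nhds 0))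
    (hode : ∀ x ≤ -M, HasDerivAt (fun y => |deriv U y| ^ (p - 2) * deriv U y)
      (V x ^ p * U x ^ (p - 1)) x)
    (hV : ∀ x ≤ -M, 2 * k * |x| ≤ V x)
    (hmatch : C * Real.exp (-(k * M ^ 2)) = U (-M))
    (hsup : ∀ x ≤ -M,
      deriv (fun y => |deriv (fun t : ℝ => C * Real.exp (-(k * t ^ 2))) y| ^ (p - 2) *
          deriv (fun t : ℝ => C * Real.exp (-(k * t ^ 2))) y) x
        ≤ V x ^ p * (C * Real.exp (-(k * x ^ 2))) ^ (p - 1)) :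
    ∀ x ≤ -M, U x ≤ C * Real.exp (-(k * x ^ 2)) :=
  stmt11_general p k M C hp hk hM hC U V hUC1 hUlim hode hV hmatch hsup
end

section
/- Let p > 1 and let (U, V) be nonnegative C² solutions on ℝ of (|U'|^{p-2}U')' = V^pU^{p-1}, (|V'|^{p-2}V')' = U^pV^{p-1} with U, V > 0, |U'|^p + |V'|^p - U^pV^p = T with T > 0. If U' > 0 and V' < 0 everywhere, then U' and V' are bounded: there exists C with |U'(x)| + |V'(x)| ≤ C for all x. -/
/-!
For `p ≠ 2` the system itself conserves `(p - 1) (|U'|^p + |V'|^p) - U^p V^p`; together with the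
energy identity this makes `(p - 2) (U V)^p` constant, so `U V` is constant and
`|U'|^p + |V'|^p = T + (U V)^p` is bounded.

For `p = 2`, `W = U' - V' = |U'| + |V'|` satisfies `W' = U V (V - U)` with `V - U` strictly
decreasing, so `W` increases up to the crossing point of `U` and `V` (if any) and decreases after
it. On `[0, ∞)`, wherever `U ≤ V` we have `U ≤ V ≤ V 0`, hence `W² ≤ 2 (U'² + V'²) = 2 (T + U² V²)`
is bounded there; the negative half-line follows by the symmetry `(U, V) (x) ↦ (V, U) (-x)`.
-/

open Real Filter

lemma abs_rpow_sub_two_mul_of_pos {a : ℝ} (p : ℝ) (ha : 0 < a) :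
    |a| ^ (p - 2) * a = a ^ (p - 1) := by
  rw [abs_of_pos ha, ← rpow_add_one ha.ne']
  ring_nf

lemma hasDerivAt_abs_rpow_of_pos {f : ℝ → ℝ} {g x p : ℝ} (hp : 1 < p) (hf : ∀ y, 0 < f y)
    (h : HasDerivAt (fun y => |f y| ^ (p - 2) * f y) g x) :
    HasDerivAt (fun y => |f y| ^ p) (p / (p - 1) * g * f x) x := by
  have hp1 : p - 1 ≠ 0 := by linarith
  simp only [abs_rpow_sub_two_mul_of_pos p (hf _)] at h
  have hq : 1 ≤ p / (p - 1) := by rw [one_le_div₀ (by linarith)]; linarith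
  have key := h.rpow_const (Or.inr hq)
  have hpow : ∀ y, (f y ^ (p - 1)) ^ (p / (p - 1)) = |f y| ^ p := fun y => by
    rw [← rpow_mul (hf y).le, abs_of_pos (hf y), mul_div_cancel₀ _ hp1]
  have hexp : (p - 1) * (p / (p - 1) - 1) = 1 := by field_simp; ring
  simp only [hpow, ← rpow_mul (hf x).le, hexp, rpow_one] at key
  convert key using 1
  ring

lemma hasDerivAt_abs_rpow_of_neg {f : ℝ → ℝ} {g x p : ℝ} (hp : 1 < p) (hf : ∀ y, f y < 0)
    (h : HasDerivAt (fun y => |f y| ^ (p - 2) * f y) g x) :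
    HasDerivAt (fun y => |f y| ^ p) (p / (p - 1) * g * f x) x := by
  have h' : HasDerivAt (fun y => |-f y| ^ (p - 2) * -f y) (-g) x := by
    simpa only [abs_neg, mul_neg] using h.fun_neg
  convert hasDerivAt_abs_rpow_of_pos hp (fun y => neg_pos.2 (hf y)) h' using 1
  · simp only [abs_neg]
  · ring

lemma abs_add_abs_le_two_mul_rpow_inv {a b M p : ℝ} (hp : 0 < p) (h : |a| ^ p + |b| ^ p ≤ M) :
    |a| + |b| ≤ 2 * M ^ p⁻¹ := by
  have ha := rpow_nonneg (abs_nonneg a) p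
  have hb := rpow_nonneg (abs_nonneg b) p
  have hM : 0 ≤ M := by linarith
  have ha' := (le_rpow_inv_iff_of_pos (abs_nonneg a) hM hp).2 (by linarith)
  have hb' := (le_rpow_inv_iff_of_pos (abs_nonneg b) hM hp).2 (by linarith)
  linarith

section PLaplacianSystem

variable {p : ℝ} {U V : ℝ → ℝ} (hp : 1 < p) (hUpos : ∀ x, 0 < U x) (hVpos : ∀ x, 0 < V x)
  (hUe : ∀ x, HasDerivAt (fun y => |deriv U y| ^ (p - 2) * deriv U y)
    (V x ^ p * U x ^ (p - 1)) x)
  (hVe : ∀ x, HasDerivAt (fun y => |deriv V y| ^ (p - 2) * deriv V y)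
    (U x ^ p * V x ^ (p - 1)) x)
  (hU' : ∀ x, 0 < deriv U x) (hV' : ∀ x, deriv V x < 0)
include hp hUpos hVpos hUe hVe hU' hV'

lemma hasDerivAt_energy_s14 (x : ℝ) :
    HasDerivAt (fun y => |deriv U y| ^ p + |deriv V y| ^ p - U y ^ p * V y ^ p)
      (p * (2 - p) / (p - 1) * (U x ^ (p - 1) * V x ^ (p - 1)) *
        (deriv U x * V x + U x * deriv V x)) x := by
  have hUd := (differentiableAt_of_deriv_ne_zero (hU' x).ne').hasDerivAt
  have hVd := (differentiableAt_of_deriv_ne_zero (hV' x).ne).hasDerivAt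
  refine (((hasDerivAt_abs_rpow_of_pos hp hU' (hUe x)).fun_add
    (hasDerivAt_abs_rpow_of_neg hp hV' (hVe x))).fun_sub
    ((hUd.rpow_const (p := p) (Or.inl (hUpos x).ne')).fun_mul
      (hVd.rpow_const (p := p) (Or.inl (hVpos x).ne')))).congr_deriv ?_
  have hp1 : p - 1 ≠ 0 := by linarith
  have hU0 := (hUpos x).ne'
  have hV0 := (hVpos x).ne'
  rw [rpow_sub_one hU0, rpow_sub_one hV0]
  field_simp
  ring

lemma mul_eq_mul_at_zero_of_ne_two {T : ℝ} (hp2 : p ≠ 2)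
    (hen : ∀ x, |deriv U x| ^ p + |deriv V x| ^ p - U x ^ p * V x ^ p = T) (x : ℝ) :
    U x * V x = U 0 * V 0 := by
  have hUd : Differentiable ℝ U := fun x => differentiableAt_of_deriv_ne_zero (hU' x).ne'
  have hVd : Differentiable ℝ V := fun x => differentiableAt_of_deriv_ne_zero (hV' x).ne
  refine is_const_of_deriv_eq_zero (hUd.mul hVd) (fun y => ?_) x 0
  have hzero := (hasDerivAt_energy_s14 hp hUpos hVpos hUe hVe hU' hV' y).unique
    ((hasDerivAt_const y T).congr_of_eventuallyEq (Eventually.of_forall hen))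
  have hcoef : p * (2 - p) / (p - 1) * (U y ^ (p - 1) * V y ^ (p - 1)) ≠ 0 := by
    have : 2 - p ≠ 0 := sub_ne_zero.2 (Ne.symm hp2)
    have := rpow_pos_of_pos (hUpos y) (p - 1)
    have := rpow_pos_of_pos (hVpos y) (p - 1)
    have : p - 1 ≠ 0 := by linarith
    positivity
  change deriv (fun y => U y * V y) y = 0
  rw [deriv_fun_mul (hUd y) (hVd y)]
  exact (mul_eq_zero.1 hzero).resolve_left hcoef

lemma exists_bound_of_ne_two {T : ℝ} (hp2 : p ≠ 2)
    (hen : ∀ x, |deriv U x| ^ p + |deriv V x| ^ p - U x ^ p * V x ^ p = T) :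
    ∃ C, ∀ x, |deriv U x| + |deriv V x| ≤ C := by
  refine ⟨2 * (T + (U 0 * V 0) ^ p) ^ p⁻¹,
    fun x => abs_add_abs_le_two_mul_rpow_inv (by linarith) ?_⟩
  rw [← mul_eq_mul_at_zero_of_ne_two hp hUpos hVpos hUe hVe hU' hV' hp2 hen x,
    mul_rpow (hUpos x).le (hVpos x).le]
  linarith [hen x]

end PLaplacianSystem

section Semilinear

variable {u v : ℝ → ℝ} {T : ℝ} (hupos : ∀ x, 0 < u x) (hvpos : ∀ x, 0 < v x)
  (hue : ∀ x, HasDerivAt (deriv u) (v x ^ 2 * u x) x)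
  (hve : ∀ x, HasDerivAt (deriv v) (u x ^ 2 * v x) x)
  (hu' : ∀ x, 0 < deriv u x) (hv' : ∀ x, deriv v x < 0)
  (hen : ∀ x, deriv u x ^ 2 + deriv v x ^ 2 - u x ^ 2 * v x ^ 2 = T)
include hupos hvpos hue hve hu' hv' hen

lemma exists_bound_deriv_sub_deriv_of_nonneg :
    ∃ C, ∀ x, 0 ≤ x → deriv u x - deriv v x ≤ C := by
  have hud : Differentiable ℝ u := fun x => differentiableAt_of_deriv_ne_zero (hu' x).ne'
  have hvd : Differentiable ℝ v := fun x => differentiableAt_of_deriv_ne_zero (hv' x).ne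
  have hgap : StrictAnti (fun x => v x - u x) := strictAnti_of_deriv_neg fun x => by
    rw [deriv_fun_sub (hvd x) (hud x)]
    linarith [hu' x, hv' x]
  have hW : ∀ x, HasDerivAt (fun y => deriv u y - deriv v y)
      (u x * v x * (v x - u x)) x := fun x =>
    ((hue x).fun_sub (hve x)).congr_deriv (by ring)
  have hWd : Differentiable ℝ (fun y => deriv u y - deriv v y) :=
    fun x => (hW x).differentiableAt
  -- once `v ≤ u` it stays so, hence `u' - v'` decreases from then on
  have hdesc : ∀ a b, a ≤ b → v a ≤ u a → deriv u b - deriv v b ≤ deriv u a - deriv v a := by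
    intro a b hab ha
    refine antitoneOn_of_deriv_nonpos (convex_Icc a b) hWd.continuous.continuousOn
      hWd.differentiableOn ?_ ⟨le_rfl, hab⟩ ⟨hab, le_rfl⟩ hab
    intro y hy
    rw [interior_Icc] at hy
    have hy' : v y - u y ≤ v a - u a := hgap.antitone hy.1.le
    rw [(hW y).deriv]
    exact mul_nonpos_of_nonneg_of_nonpos (mul_pos (hupos y) (hvpos y)).le (by linarith)
  have hgood : ∀ a, 0 ≤ a → u a ≤ v a →
      deriv u a - deriv v a ≤ √(2 * (T + v 0 ^ 4)) := by
    intro a ha huv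
    have hva : v a ≤ v 0 := (strictAnti_of_deriv_neg hv').antitone ha
    have huv0 : u a * v a ≤ v 0 ^ 2 := by nlinarith [hupos a, hvpos a]
    refine (le_abs_self _).trans (abs_le_sqrt ?_)
    nlinarith [sq_nonneg (deriv u a + deriv v a), hen a, mul_pos (hupos a) (hvpos a)]
  refine ⟨max (deriv u 0 - deriv v 0) √(2 * (T + v 0 ^ 4)), fun x hx => ?_⟩
  rcases le_or_gt (u x) (v x) with hx_good | hx_bad
  · exact (hgood x hx hx_good).trans (le_max_right _ _)
  rcases le_or_gt (v 0) (u 0) with h0 | h0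
  · exact (hdesc 0 x hx h0).trans (le_max_left _ _)
  obtain ⟨a, ⟨ha0, hax⟩, hcross⟩ := intermediate_value_Icc' hx
    (hvd.continuous.sub hud.continuous).continuousOn
    (show (0 : ℝ) ∈ Set.Icc (v x - u x) (v 0 - u 0) from ⟨by linarith, by linarith⟩)
  have hcross : v a = u a := by linarith [show v a - u a = 0 from hcross]
  exact (hdesc a x hax hcross.le).trans ((hgood a ha0 hcross.ge).trans (le_max_right _ _))

lemma exists_bound_deriv_sub_deriv : ∃ C, ∀ x, deriv u x - deriv v x ≤ C := by
  obtain ⟨Cpos, hCpos⟩ := exists_bound_deriv_sub_deriv_of_nonneg hupos hvpos hue hve hu' hv' hen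
  have hderiv : ∀ f : ℝ → ℝ, deriv (fun x => f (-x)) = fun x => -deriv f (-x) :=
    fun f => funext (deriv_comp_neg f)
  have hflip : ∀ {f g : ℝ → ℝ}, (∀ x, HasDerivAt (deriv f) (g x) x) →
      ∀ x, HasDerivAt (deriv fun y => f (-y)) (g (-x)) x := fun h x => by
    rw [hderiv]
    simpa [Function.comp_def] using ((h (-x)).comp x (hasDerivAt_neg x)).fun_neg
  -- the reflection `x ↦ (v (-x), u (-x))` solves the same system
  obtain ⟨Cneg, hCneg⟩ := exists_bound_deriv_sub_deriv_of_nonneg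
    (u := fun x => v (-x)) (v := fun x => u (-x)) (T := T) (fun x => hvpos _) (fun x => hupos _)
    (hflip hve) (hflip hue) (fun x => by simp [hderiv, hv']) (fun x => by simp [hderiv, hu'])
    (fun x => by simp only [hderiv]; linear_combination hen (-x))
  refine ⟨max Cpos Cneg, fun x => ?_⟩
  rcases le_total 0 x with hx | hx
  · exact (hCpos x hx).trans (le_max_left _ _)
  · have hneg := hCneg (-x) (neg_nonneg.2 hx)
    simp only [hderiv, neg_neg] at hneg
    linarith [le_max_right Cpos Cneg]

end Semilinear

theorem stmt14_general (p T : ℝ) (hp : 1 < p) (U V : ℝ → ℝ)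
    (hUpos : ∀ x, 0 < U x) (hVpos : ∀ x, 0 < V x)
    (hUe : ∀ x, HasDerivAt (fun y => |deriv U y| ^ (p - 2) * deriv U y)
      (V x ^ p * U x ^ (p - 1)) x)
    (hVe : ∀ x, HasDerivAt (fun y => |deriv V y| ^ (p - 2) * deriv V y)
      (U x ^ p * V x ^ (p - 1)) x)
    (hU' : ∀ x, 0 < deriv U x) (hV' : ∀ x, deriv V x < 0)
    (hen : ∀ x, |deriv U x| ^ p + |deriv V x| ^ p - U x ^ p * V x ^ p = T) :
    ∃ C : ℝ, ∀ x, |deriv U x| + |deriv V x| ≤ C := by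
  rcases eq_or_ne p 2 with rfl | hp2
  · have hsimp : ∀ a : ℝ, |a| ^ ((2 : ℝ) - 2) * a = a ∧ a ^ ((2 : ℝ) - 1) = a := by norm_num
    obtain ⟨C, hC⟩ := exists_bound_deriv_sub_deriv (T := T) hUpos hVpos
      (fun x => by simpa [hsimp, rpow_two] using hUe x)
      (fun x => by simpa [hsimp, rpow_two] using hVe x) hU' hV'
      (fun x => by simpa [rpow_two] using hen x)
    refine ⟨C, fun x => ?_⟩
    rw [abs_of_pos (hU' x), abs_of_neg (hV' x)]
    linarith [hC x]
  · exact exists_bound_of_ne_two hp hUpos hVpos hUe hVe hU' hV' hp2 hen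

theorem stmt14 (p T : ℝ) (hp : 1 < p) (hT : 0 < T) (U V : ℝ → ℝ)
    (hU : ContDiff ℝ 2 U) (hV : ContDiff ℝ 2 V)
    (hUpos : ∀ x, 0 < U x) (hVpos : ∀ x, 0 < V x)
    (hUe : ∀ x, HasDerivAt (fun y => |deriv U y| ^ (p - 2) * deriv U y)
      (V x ^ p * U x ^ (p - 1)) x)
    (hVe : ∀ x, HasDerivAt (fun y => |deriv V y| ^ (p - 2) * deriv V y)
      (U x ^ p * V x ^ (p - 1)) x)
    (hU' : ∀ x, 0 < deriv U x) (hV' : ∀ x, deriv V x < 0)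
    (hen : ∀ x, |deriv U x| ^ p + |deriv V x| ^ p - U x ^ p * V x ^ p = T) :
    ∃ C : ℝ, ∀ x, |deriv U x| + |deriv V x| ≤ C :=
  stmt14_general p T hp U V hUpos hVpos hUe hVe hU' hV' hen
end
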